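/- arXiv:2512.18136 — 5 statements merged into one kernel-verified Lean document; each statement's English description precedes it below -/
import Mathlib

section
/- Let e, k, j, n be positive integers with j ≥ 2, j < k, 2k > e, j + k ≤ e - 1, and n chosen so that (n-1)/n ≤ (k-j)/(e-2) < n/(n+1). Then S_k^e(j) is symmetric if and only if n(k-j) = (n-1)(e-2). -/
/-- The set of gaps of a numerical semigroup (submonoid of ℕ). -/
def gapsOf (S : AddSubmonoid ℕ) : Set ℕ := {n | n ∉ S}

/-- The Frobenius number: the largest gap. -/
noncomputable def frobeniusNumber (S : AddSubmonoid ℕ) : ℕ := sSup (gapsOf S)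

/-- The genus: the number of gaps. -/
noncomputable def genusOf (S : AddSubmonoid ℕ) : ℕ := Nat.card (gapsOf S)

/-- A numerical semigroup is symmetric iff 2g = F + 1. -/
def IsSymmetricNS (S : AddSubmonoid ℕ) : Prop :=
  2 * genusOf S = frobeniusNumber S + 1

/-- The Sally type semigroup `S_k^e(j) = ⟨e,…,e+j-1, e+j+k,…,2e-1⟩`. -/
def sally (e k j : ℕ) : AddSubmonoid ℕ :=
  AddSubmonoid.closure (Set.Ico e (e + j) ∪ Set.Ico (e + j + k) (2 * e))

/-!
Write `x = m * e + r` with `r < e`, and put `a = j - 1`, `d = e - (j + k)`. In row `m` the lower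
generators reach every `r ≤ m * a`, and sums of the upper generators `2e - d'` (`1 ≤ d' ≤ d`)
reach every `r ≥ e - ⌈m / 2⌉ * d`; since this description is closed under addition, it is exact.
So row `m` has `e - 1 - m * a - ⌈m / 2⌉ * d` gaps as long as this is positive. With `P = 2a + d`,
the hypotheses on `n` say `e - 2 = n * P + ρ` with `0 ≤ ρ = n(k - j) - (n - 1)(e - 2) < P`, and
the last row with gaps is `2n` or `2n + 1` according as `ρ < a + d` or not. Summing the rows gives
`2g - (F + 1) = (2n + 1) ρ` in the first case and `(n + 1)(2ρ - P) > 0` in the second.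
-/

open Finset

namespace Sally

variable {e a d m M m₁ m₂ r₁ r₂ : ℕ}

/-- `(m + 1) / 2 = ⌈m / 2⌉`: a sum of `t` upper generators `2e - d'` lies in row `2t - 1`. -/
def Admissible (e a d m r : ℕ) : Prop :=
  r ≤ m * a ∨ e ≤ r + (m + 1) / 2 * d

theorem Admissible.add (h₁ : Admissible e a d m₁ r₁) (h₂ : Admissible e a d m₂ r₂) :
    Admissible e a d (m₁ + m₂) (r₁ + r₂) := by
  have ha : (m₁ + m₂) * a = m₁ * a + m₂ * a := add_mul _ _ _
  have hc : (m₁ + 1) / 2 * d ≤ (m₁ + m₂ + 1) / 2 * d := Nat.mul_le_mul_right d (by omega)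
  have hc' : (m₂ + 1) / 2 * d ≤ (m₁ + m₂ + 1) / 2 * d := Nat.mul_le_mul_right d (by omega)
  unfold Admissible at h₁ h₂ ⊢
  omega

theorem Admissible.add_carry (hr₁ : r₁ < e) (hr₂ : r₂ < e)
    (h₁ : Admissible e a d m₁ r₁) (h₂ : Admissible e a d m₂ r₂) :
    Admissible e a d (m₁ + m₂ + 1) (r₁ + r₂ - e) := by
  have ha₁ : m₁ * a ≤ (m₁ + m₂ + 1) * a := Nat.mul_le_mul_right a (by omega)
  have ha₂ : m₂ * a ≤ (m₁ + m₂ + 1) * a := Nat.mul_le_mul_right a (by omega)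
  have hc : (m₁ + 1) / 2 * d + (m₂ + 1) / 2 * d ≤ (m₁ + m₂ + 1 + 1) / 2 * d := by
    rw [← add_mul]; exact Nat.mul_le_mul_right d (by omega)
  unfold Admissible at h₁ h₂ ⊢
  omega

def admissibleSubmonoid (e a d : ℕ) (he : 0 < e) : AddSubmonoid ℕ where
  carrier := {x | Admissible e a d (x / e) (x % e)}
  zero_mem' := by simp [Admissible]
  add_mem' {x y} hx hy := by
    rcases lt_or_ge (x % e + y % e) e with h | h
    · show Admissible e a d _ _
      rw [Nat.add_div_eq_of_add_mod_lt h, Nat.add_mod_of_add_mod_lt h]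
      exact hx.add hy
    · have hmod := Nat.add_mod_add_of_le_add_mod h
      show Admissible e a d _ _
      rw [Nat.add_div_eq_of_le_mod_add_mod h he,
        show (x + y) % e = x % e + y % e - e by omega]
      exact hx.add_carry (Nat.mod_lt x he) (Nat.mod_lt y he) hy

def rowGaps (e a d m : ℕ) : Finset ℕ :=
  Ioo (m * e + m * a) (m * e + (e - (m + 1) / 2 * d))

theorem mem_rowGaps_iff (he : 0 < e) {x : ℕ} :
    x ∈ rowGaps e a d m ↔ x / e = m ∧ ¬Admissible e a d m (x % e) := by
  have hx := Nat.div_add_mod' x e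
  rw [rowGaps, mem_Ioo, Admissible]
  constructor
  · rintro ⟨h₁, h₂⟩
    have hm : x / e = m := Nat.div_eq_of_lt_le (by omega) (by rw [add_one_mul]; omega)
    rw [hm] at hx
    exact ⟨hm, by omega⟩
  · rintro ⟨rfl, h⟩
    have := Nat.mod_lt x he
    omega

theorem card_rowGaps : #(rowGaps e a d m) = e - (m + 1) / 2 * d - m * a - 1 := by
  rw [rowGaps, Nat.card_Ioo]; omega

theorem rowGaps_eq_empty (hM : e ≤ M * a + (M + 1) / 2 * d + 1) (hm : M ≤ m) :
    rowGaps e a d m = ∅ := by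
  have ha : M * a ≤ m * a := Nat.mul_le_mul_right a hm
  have hd : (M + 1) / 2 * d ≤ (m + 1) / 2 * d := Nat.mul_le_mul_right d (by omega)
  rw [← card_eq_zero, card_rowGaps]
  omega

theorem pairwiseDisjoint_rowGaps (he : 0 < e) (s : Set ℕ) :
    s.PairwiseDisjoint (rowGaps e a d) := by
  intro m _ m' _ hmm'
  refine disjoint_left.2 fun x hx hx' => hmm' ?_
  rw [← ((mem_rowGaps_iff he).1 hx).1, ← ((mem_rowGaps_iff he).1 hx').1]

theorem sum_card_rowGaps (hM : M * a + (M + 1) / 2 * d + 2 ≤ e) :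
    ∑ m ∈ range (M + 1), #(rowGaps e a d m) + (∑ m ∈ range (M + 1), m) * a +
      (∑ m ∈ range (M + 1), (m + 1) / 2) * d + (M + 1) = (M + 1) * e := by
  calc _ = ∑ m ∈ range (M + 1), (#(rowGaps e a d m) + m * a + (m + 1) / 2 * d + 1) := by
          simp only [sum_add_distrib, sum_mul, sum_const, card_range, smul_eq_mul, mul_one]
    _ = ∑ _m ∈ range (M + 1), e := sum_congr rfl fun m hm => by
          have ha : m * a ≤ M * a := Nat.mul_le_mul_right a (by simp at hm; omega)
          have hd : (m + 1) / 2 * d ≤ (M + 1) / 2 * d :=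
            Nat.mul_le_mul_right d (by simp at hm; omega)
          rw [card_rowGaps]
          omega
    _ = (M + 1) * e := by simp

end Sally

section Membership

variable {e k j : ℕ}

theorem mul_add_mem_sally_of_le (hj : 1 ≤ j) {m r : ℕ} (h : r ≤ m * (j - 1)) :
    m * e + r ∈ sally e k j := by
  induction m generalizing r with
  | zero => simp_all
  | succ m ih =>
    have hgen : e + min r (j - 1) ∈ sally e k j :=
      AddSubmonoid.subset_closure (Or.inl (Set.mem_Ico.2 ⟨by omega, by omega⟩))
    have hrest : m * e + (r - min r (j - 1)) ∈ sally e k j := ih (by rw [add_one_mul] at h; omega)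
    convert (sally e k j).add_mem hgen hrest using 1
    rw [add_one_mul]; omega

theorem mul_mem_sally (hj : 1 ≤ j) (m : ℕ) : m * e ∈ sally e k j := by
  simpa using mul_add_mem_sally_of_le (k := k) (e := e) hj (Nat.zero_le (m * (j - 1)))

/-- Sums of `t` generators `2e - d'`, `1 ≤ d' ≤ e - (j + k)`, of the upper block. -/
theorem two_mul_mul_sub_mem_sally {t s : ℕ} (hts : t ≤ s) (hs : s ≤ t * (e - (j + k))) :
    2 * t * e - s ∈ sally e k j := by
  induction t generalizing s with
  | zero => simp
  | succ t ih =>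
    have hD : 0 < e - (j + k) :=
      (CanonicallyOrderedAdd.mul_pos.1 (show 0 < (t + 1) * (e - (j + k)) by omega)).2
    rw [add_one_mul] at hs
    have htD : t ≤ t * (e - (j + k)) := Nat.le_mul_of_pos_right t hD
    have hDe : t * (e - (j + k)) ≤ t * e := Nat.mul_le_mul_left t (Nat.sub_le e _)
    set d := min (e - (j + k)) (s - t) with hd
    have hgen : 2 * e - d ∈ sally e k j :=
      AddSubmonoid.subset_closure (Or.inr (Set.mem_Ico.2 ⟨by omega, by omega⟩))
    have hrest : 2 * t * e - (s - d) ∈ sally e k j := ih (by omega) (by omega)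
    convert (sally e k j).add_mem hrest hgen using 1
    rw [show 2 * (t + 1) * e = 2 * (t * e) + 2 * e by ring, show 2 * t * e = 2 * (t * e) by ring]
    omega

theorem mul_add_mem_sally_of_le_add (hj : 1 ≤ j) {m r : ℕ} (hr : r < e)
    (h : e ≤ r + (m + 1) / 2 * (e - (j + k))) : m * e + r ∈ sally e k j := by
  obtain ⟨hc, hd⟩ :=
    CanonicallyOrderedAdd.mul_pos.1 (show 0 < (m + 1) / 2 * (e - (j + k)) by omega)
  set t := min ((m + 1) / 2) (e - r) with ht_def
  have ht : e - r ≤ t * (e - (j + k)) := by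
    rcases min_choice ((m + 1) / 2) (e - r) with h' | h' <;> rw [ht_def, h']
    · omega
    · exact Nat.le_mul_of_pos_right _ hd
  have hte : e ≤ 2 * t * e := Nat.le_mul_of_pos_left e (by omega)
  have hsplit : m * e + r = (m + 1 - 2 * t) * e + (2 * t * e - (e - r)) := by
    have : (m + 1 - 2 * t) * e + 2 * t * e = m * e + e := by
      rw [← add_mul, Nat.sub_add_cancel (by omega), add_one_mul]
    omega
  rw [hsplit]
  exact add_mem (mul_mem_sally hj _) (two_mul_mul_sub_mem_sally (by omega) ht)

theorem mem_sally_iff (hj : 1 ≤ j) (hjke : j + k ≤ e) {x : ℕ} :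
    x ∈ sally e k j ↔ Sally.Admissible e (j - 1) (e - (j + k)) (x / e) (x % e) := by
  have he : 0 < e := by omega
  constructor
  · refine fun hx =>
      (AddSubmonoid.closure_le (S := Sally.admissibleSubmonoid e (j - 1) (e - (j + k)) he)).2
        (fun g hg => ?_) hx
    have hg' : e ≤ g ∧ g < 2 * e := by rcases hg with ⟨h₁, h₂⟩ | ⟨h₁, h₂⟩ <;> omega
    obtain ⟨hdiv, hmod⟩ :=
      (Nat.div_mod_unique (a := g) (d := 1) (c := g - e) he).2 ⟨by omega, by omega⟩
    show Sally.Admissible e _ _ (g / e) (g % e)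
    rw [hdiv, hmod, Sally.Admissible]
    rcases hg with ⟨h₁, h₂⟩ | ⟨h₁, h₂⟩ <;> omega
  · intro h
    rw [← Nat.div_add_mod' x e]
    rcases h with h | h
    · exact mul_add_mem_sally_of_le hj h
    · exact mul_add_mem_sally_of_le_add hj (Nat.mod_lt x he) h

end Membership

section Gaps

variable {e k j M : ℕ}

theorem gapsOf_sally (hj : 1 ≤ j) (hjke : j + k ≤ e)
    (hM : e ≤ (M + 1) * (j - 1) + (M + 1 + 1) / 2 * (e - (j + k)) + 1) :
    gapsOf (sally e k j) =
      ↑((range (M + 1)).biUnion (Sally.rowGaps e (j - 1) (e - (j + k)))) := by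
  have he : 0 < e := by omega
  ext x
  simp only [gapsOf, Set.mem_ofPred_eq, coe_biUnion, mem_coe, mem_range, Set.mem_iUnion,
    exists_prop, mem_sally_iff hj hjke]
  constructor
  · intro hx
    have hmem := (Sally.mem_rowGaps_iff he).2 ⟨rfl, hx⟩
    refine ⟨x / e, ?_, hmem⟩
    by_contra! hlt
    rw [Sally.rowGaps_eq_empty hM hlt] at hmem
    exact notMem_empty x hmem
  · rintro ⟨m, -, hx⟩
    obtain ⟨rfl, h⟩ := (Sally.mem_rowGaps_iff he).1 hx
    exact h

theorem genusOf_sally (hj : 1 ≤ j) (hjke : j + k ≤ e)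
    (hrow : M * (j - 1) + (M + 1) / 2 * (e - (j + k)) + 2 ≤ e)
    (hM : e ≤ (M + 1) * (j - 1) + (M + 1 + 1) / 2 * (e - (j + k)) + 1) :
    genusOf (sally e k j) + (∑ m ∈ range (M + 1), m) * (j - 1) +
      (∑ m ∈ range (M + 1), (m + 1) / 2) * (e - (j + k)) + (M + 1) = (M + 1) * e := by
  rw [genusOf, gapsOf_sally hj hjke hM, Nat.card_coe_set_eq, Set.ncard_coe_finset,
    card_biUnion (Sally.pairwiseDisjoint_rowGaps (by omega) _)]
  exact Sally.sum_card_rowGaps hrow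

theorem frobeniusNumber_sally (hj : 1 ≤ j) (hjke : j + k ≤ e)
    (hrow : M * (j - 1) + (M + 1) / 2 * (e - (j + k)) + 2 ≤ e)
    (hM : e ≤ (M + 1) * (j - 1) + (M + 1 + 1) / 2 * (e - (j + k)) + 1) :
    frobeniusNumber (sally e k j) + 1 = M * e + (e - (M + 1) / 2 * (e - (j + k))) := by
  suffices h :
      IsGreatest (gapsOf (sally e k j)) (M * e + (e - (M + 1) / 2 * (e - (j + k))) - 1) by
    rw [frobeniusNumber, h.csSup_eq]; omega
  rw [gapsOf_sally hj hjke hM, coe_biUnion]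
  refine ⟨Set.mem_biUnion (self_mem_range_succ M) ?_, ?_⟩
  · rw [mem_coe, Sally.rowGaps, mem_Ioo]; omega
  · simp only [upperBounds, Set.mem_iUnion, mem_coe, mem_range, Sally.rowGaps, mem_Ioo]
    rintro x ⟨m, hm, hx⟩
    rcases (show m = M ∨ m + 1 ≤ M by omega) with rfl | hm
    · omega
    · have := Nat.mul_le_mul_right e hm
      rw [add_one_mul] at this
      omega

end Gaps

theorem sum_range_two_mul_add_one_succ_div_two (n : ℕ) :
    ∑ m ∈ range (2 * n + 1), (m + 1) / 2 = n * (n + 1) := by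
  induction n with
  | zero => simp
  | succ n ih =>
    rw [show 2 * (n + 1) + 1 = 2 * n + 1 + 1 + 1 by ring, sum_range_succ, sum_range_succ, ih,
      show (2 * n + 1 + 1) / 2 = n + 1 by omega, show (2 * n + 1 + 1 + 1) / 2 = n + 1 by omega]
    ring

theorem sum_range_two_mul_add_one_id (n : ℕ) : ∑ m ∈ range (2 * n + 1), m = n * (2 * n + 1) := by
  have h := sum_range_id_mul_two (2 * n + 1)
  rw [Nat.add_sub_cancel] at h
  linarith

theorem level_remainder_mem_Ico {e k j n : ℕ} (hn : 0 < n) (he : 2 < e)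
    (h1 : ((n : ℚ) - 1) / n ≤ ((k : ℚ) - j) / ((e : ℚ) - 2))
    (h2 : ((k : ℚ) - j) / ((e : ℚ) - 2) < (n : ℚ) / (n + 1)) :
    (n : ℤ) * (k - j) - (n - 1) * (e - 2) ∈ Set.Ico 0 ((e : ℤ) + j - k - 2) := by
  have he' : (0 : ℚ) < e - 2 := by rw [sub_pos]; exact_mod_cast he
  rw [div_le_div_iff₀ (by exact_mod_cast hn) he'] at h1
  rw [div_lt_div_iff₀ he' (by positivity)] at h2
  have h1' : ((n : ℤ) - 1) * (e - 2) ≤ (k - j) * n := by exact_mod_cast h1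
  have h2' : ((k : ℤ) - j) * (n + 1) < n * (e - 2) := by exact_mod_cast h2
  constructor <;> linarith

section Defect

variable {e k j n : ℕ}

theorem two_mul_genusOf_sally_of_lt (hj : 1 ≤ j) (hjke : j + k ≤ e)
    (hρ : 0 ≤ (n : ℤ) * (k - j) - (n - 1) * (e - 2))
    (hρ' : (n : ℤ) * (k - j) - (n - 1) * (e - 2) < e - k - 1) :
    2 * (genusOf (sally e k j) : ℤ) = frobeniusNumber (sally e k j) + 1 +
      (2 * n + 1) * ((n : ℤ) * (k - j) - (n - 1) * (e - 2)) := by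
  have hrow : 2 * n * (j - 1) + (2 * n + 1) / 2 * (e - (j + k)) + 2 ≤ e := by
    rw [show (2 * n + 1) / 2 = n by omega]
    zify [hj, hjke]
    linarith
  have hM : e ≤ (2 * n + 1) * (j - 1) + (2 * n + 1 + 1) / 2 * (e - (j + k)) + 1 := by
    rw [show (2 * n + 1 + 1) / 2 = n + 1 by omega]
    zify [hj, hjke]
    linarith
  have hg := genusOf_sally hj hjke hrow hM
  have hF := frobeniusNumber_sally hj hjke hrow hM
  rw [sum_range_two_mul_add_one_id, sum_range_two_mul_add_one_succ_div_two] at hg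
  rw [show (2 * n + 1) / 2 = n by omega] at hrow hF
  have hnD : n * (e - (j + k)) ≤ e := by omega
  zify [hj, hjke, hnD] at hg hF
  linear_combination 2 * hg - hF

theorem two_mul_genusOf_sally_of_le (hj : 1 ≤ j) (hjke : j + k ≤ e)
    (hρ : e - k - 1 ≤ (n : ℤ) * (k - j) - (n - 1) * (e - 2))
    (hρ' : (n : ℤ) * (k - j) - (n - 1) * (e - 2) < e + j - k - 2) :
    2 * (genusOf (sally e k j) : ℤ) = frobeniusNumber (sally e k j) + 1 +
      (n + 1) * (2 * ((n : ℤ) * (k - j) - (n - 1) * (e - 2)) - (e + j - k - 2)) := by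
  have hrow : (2 * n + 1) * (j - 1) + (2 * n + 1 + 1) / 2 * (e - (j + k)) + 2 ≤ e := by
    rw [show (2 * n + 1 + 1) / 2 = n + 1 by omega]
    zify [hj, hjke]
    linarith
  have hM : e ≤ (2 * n + 1 + 1) * (j - 1) + (2 * n + 1 + 1 + 1) / 2 * (e - (j + k)) + 1 := by
    rw [show (2 * n + 1 + 1 + 1) / 2 = n + 1 by omega]
    zify [hj, hjke]
    linarith
  have hg := genusOf_sally hj hjke hrow hM
  have hF := frobeniusNumber_sally hj hjke hrow hM
  rw [sum_range_succ _ (2 * n + 1), sum_range_succ _ (2 * n + 1), sum_range_two_mul_add_one_id,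
    sum_range_two_mul_add_one_succ_div_two, show (2 * n + 1 + 1) / 2 = n + 1 by omega] at hg
  rw [show (2 * n + 1 + 1) / 2 = n + 1 by omega] at hrow hF
  have hnD : (n + 1) * (e - (j + k)) ≤ e := by omega
  zify [hj, hjke, hnD] at hg hF
  linear_combination 2 * hg - hF

end Defect

theorem sally_symmetric_iff_even_level_general (e k j n : ℕ) (hn : 0 < n) (hj : 2 ≤ j)
    (hjk : j < k) (hjke : j + k ≤ e - 1)
    (h1 : ((n : ℚ) - 1) / n ≤ ((k : ℚ) - j) / ((e : ℚ) - 2))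
    (h2 : ((k : ℚ) - j) / ((e : ℚ) - 2) < (n : ℚ) / (n + 1)) :
    IsSymmetricNS (sally e k j) ↔ n * (k - j) = (n - 1) * (e - 2) := by
  obtain ⟨hρ₀, hρP⟩ := level_remainder_mem_Ico hn (by omega) h1 h2
  set ρ : ℤ := n * (k - j) - (n - 1) * (e - 2) with hρ
  have hjke' : (j : ℤ) + k + 1 ≤ e := by exact_mod_cast (show j + k + 1 ≤ e by omega)
  have hrhs : n * (k - j) = (n - 1) * (e - 2) ↔ ρ = 0 := by
    rw [hρ, sub_eq_zero]
    zify [hjk.le, hn, (show 2 ≤ e by omega)]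
  rw [hrhs, IsSymmetricNS, ← Nat.cast_inj (R := ℤ)]
  push_cast
  rcases lt_or_ge ρ (e - k - 1) with hlt | hge
  · rw [two_mul_genusOf_sally_of_lt (by omega) (by omega) hρ₀ hlt, add_eq_left, mul_eq_zero]
    exact or_iff_right (by positivity)
  · rw [two_mul_genusOf_sally_of_le (by omega) (by omega) hge hρP]
    have hpos : 0 < ((n : ℤ) + 1) * (2 * ρ - (e + j - k - 2)) :=
      mul_pos (by positivity) (by linarith)
    exact iff_of_false (by linarith) (by linarith)

theorem sally_symmetric_iff_even_level (e k j n : ℕ) (hn : 0 < n) (hj : 2 ≤ j)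
    (hjk : j < k) (h2k : e < 2 * k) (hjke : j + k ≤ e - 1)
    (h1 : ((n : ℚ) - 1) / n ≤ ((k : ℚ) - j) / ((e : ℚ) - 2))
    (h2 : ((k : ℚ) - j) / ((e : ℚ) - 2) < (n : ℚ) / (n + 1)) :
    IsSymmetricNS (sally e k j) ↔ n * (k - j) = (n - 1) * (e - 2) :=
  sally_symmetric_iff_even_level_general e k j n hn hj hjk hjke h1 h2
end

section
/- Let e, k, n be positive integers with k ≤ e - 3 and (n-2)/(n-1) < k/(e-1) ≤ (n-1)/n. Then the numerical semigroup S = ⟨e, e+k+1, e+k+2, ..., 2e-1⟩ has Frobenius number ne + (n-1)k + (n-2) and genus n(n-1)k - (n² - 3n + 1)(e-1). -/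
/-!
Write `e = k + d + 1`. An element of `S = ⟨e, e+k+1, …, 2e-1⟩` is `c e` plus a sum of `a`
generators from `[e+k+1, 2e-1]`, and such sums fill the whole interval `[a (e+k+1), a (2e-1)]`.
Hence, for `0 < t < e`, the number `m e + t` lies in `S` iff `m ≥ 1` and
`t > k - ⌊(m-1)/2⌋ d`: with `j + 1` large generators one reaches the residues
`[k + 1 - j d, k + d - j]` from level `2j + 1` on. So the block `(m e, (m+1) e)` contains exactly
`k - ⌊(m-1)/2⌋ d` gaps (all `e - 1` of them for `m = 0`). With `n = N + 2` the hypothesis reads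
`N d < k ≤ (N+1) d`, so the last nonempty block is `m = 2N + 2`, whose top gap
`(2N+2) e + k - N d` is the Frobenius number, and the genus is `(e - 1) + 2 ∑_{i ≤ N} (k - i d)`.
-/

theorem AddSubmonoid.mem_closure_Icc_iff {lo hi y : ℕ} :
    y ∈ AddSubmonoid.closure (Set.Icc lo hi) ↔ ∃ a, a * lo ≤ y ∧ y ≤ a * hi := by
  refine ⟨fun hy => ?_, ?_⟩
  · induction hy using AddSubmonoid.closure_induction with
    | mem x hx => exact ⟨1, by simpa using hx.1, by simpa using hx.2⟩
    | zero => exact ⟨0, by simp, by simp⟩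
    | add x y _ _ hx hy =>
      obtain ⟨a, hxlo, hxhi⟩ := hx
      obtain ⟨b, hylo, hyhi⟩ := hy
      exact ⟨a + b, by rw [add_mul]; omega, by rw [add_mul]; omega⟩
  · rintro ⟨a, hlo, hhi⟩
    induction a generalizing y with
    | zero => simp_all
    | succ a ih =>
      have h : lo ≤ hi := Nat.le_of_mul_le_mul_left (hlo.trans hhi) a.succ_pos
      have hmono : a * lo ≤ a * hi := Nat.mul_le_mul_left a h
      rw [add_one_mul] at hlo hhi
      -- greedy choice of one summand `g ∈ [lo, hi]` leaving `y - g ∈ [a * lo, a * hi]`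
      set g := min hi (y - a * lo)
      have hg : g ∈ AddSubmonoid.closure (Set.Icc lo hi) :=
        AddSubmonoid.subset_closure ⟨by omega, by omega⟩
      have hrest := ih (y := y - g) (by omega) (by omega)
      simpa [show g + (y - g) = y by omega] using add_mem hg hrest

theorem Finset.sum_range_two_mul_div_two {M : Type*} [AddCommMonoid M] (f : ℕ → M) (n : ℕ) :
    ∑ i ∈ Finset.range (2 * n), f (i / 2) = 2 • ∑ i ∈ Finset.range n, f i := by
  induction n with
  | zero => simp
  | succ n ih =>
    rw [show 2 * (n + 1) = 2 * n + 1 + 1 by ring, Finset.sum_range_succ, Finset.sum_range_succ,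
      ih, Finset.sum_range_succ, show (2 * n + 1) / 2 = n by omega, show 2 * n / 2 = n by omega,
      smul_add, two_nsmul (f n), add_assoc]

theorem two_mul_sum_range_sub_mul (a b : ℤ) (n : ℕ) :
    2 * ∑ i ∈ Finset.range n, (a - i * b) = 2 * n * a - n * (n - 1) * b := by
  induction n with
  | zero => simp
  | succ n ih => rw [Finset.sum_range_succ, mul_add, ih]; push_cast; ring

theorem mem_sally_one_iff {e k x : ℕ} :
    x ∈ sally e k 1 ↔ ∃ c a, c * e + a * (e + k + 1) ≤ x ∧ x ≤ c * e + a * (2 * e - 1) := by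
  have hgen : Set.Ico e (e + 1) ∪ Set.Ico (e + 1 + k) (2 * e) =
      {e} ∪ Set.Icc (e + k + 1) (2 * e - 1) := by
    ext y; simp only [Set.mem_union, Set.mem_Ico, Set.mem_singleton_iff, Set.mem_Icc]; omega
  rw [sally, hgen, AddSubmonoid.closure_union, AddSubmonoid.mem_sup]
  simp only [AddSubmonoid.mem_closure_singleton, AddSubmonoid.mem_closure_Icc_iff, smul_eq_mul]
  constructor
  · rintro ⟨_, ⟨c, rfl⟩, y, ⟨a, hlo, hhi⟩, rfl⟩
    exact ⟨c, a, by omega, by omega⟩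
  · rintro ⟨c, a, hlo, hhi⟩
    exact ⟨c * e, ⟨c, rfl⟩, x - c * e, ⟨a, by omega, by omega⟩, by omega⟩

section Blocks

variable {k d : ℕ}

theorem mul_add_mem_sally_one_of_bounds {m t j : ℕ} (hj : 2 * j + 1 ≤ m)
    (hlo : k + 1 ≤ t + j * d) (hhi : t + j ≤ k + d) :
    m * (k + d + 1) + t ∈ sally (k + d + 1) k 1 := by
  obtain ⟨c, rfl⟩ : ∃ c, m = c + 2 * j + 1 := ⟨m - (2 * j + 1), by omega⟩
  rw [mem_sally_one_iff]
  refine ⟨c, j + 1, ?_, ?_⟩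
  · nlinarith
  · rw [show 2 * (k + d + 1) - 1 = 2 * k + 2 * d + 1 by omega]
    nlinarith

theorem mul_add_mem_sally_one_iff (hd : 0 < d) {m t : ℕ} (ht : 0 < t) (htk : t ≤ k + d) :
    m * (k + d + 1) + t ∈ sally (k + d + 1) k 1 ↔ 0 < m ∧ k < t + (m - 1) / 2 * d := by
  constructor
  · rw [mem_sally_one_iff, show 2 * (k + d + 1) - 1 = k + d + 1 + (k + d) by omega]
    rintro ⟨c, a, hlo, hhi⟩
    -- with `m = c + a + q`, the `a` large generators sum to `(a + q) e + t`,
    -- which forces `q < a` and `k < t + q d`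
    have hca : c + a ≤ m := by
      by_contra! h
      nlinarith
    obtain ⟨q, rfl⟩ : ∃ q, m = c + a + q := ⟨m - (c + a), by omega⟩
    have hqa : q < a := by
      by_contra! h
      nlinarith
    have hq : k + 1 ≤ t + q * d := by nlinarith
    have hqm : q ≤ (c + a + q - 1) / 2 := by omega
    exact ⟨by omega, by nlinarith⟩
  · rintro ⟨hm, hk⟩
    suffices h : ∀ j, 2 * j + 1 ≤ m → k < t + j * d →
        m * (k + d + 1) + t ∈ sally (k + d + 1) k 1 from h _ (by omega) hk
    intro j
    -- the ranges `[k + 1 - j d, k + d - j]` reached with `j + 1` large generators overlap for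
    -- consecutive `j`, so it suffices to use the least `j` with `k < t + j d`
    induction j with
    | zero =>
      exact fun hj hk => mul_add_mem_sally_one_of_bounds hj (by simpa using hk) (by omega)
    | succ j ih =>
      intro hj hk
      by_cases hprev : k < t + j * d
      · exact ih (by omega) hprev
      · exact mul_add_mem_sally_one_of_bounds hj hk (by nlinarith)

/-- With `e = k + d + 1`, the gaps of `sally e k 1` in `(m e, (m+1) e)` are
`m e + 1, …, m e + sallyBlockGapCount k d m`. -/
def sallyBlockGapCount (k d m : ℕ) : ℕ := if m = 0 then k + d else k - (m - 1) / 2 * d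

def sallyGapBlock (k d m : ℕ) : Finset ℕ :=
  Finset.Ioc (m * (k + d + 1)) (m * (k + d + 1) + sallyBlockGapCount k d m)

theorem sallyBlockGapCount_le (m : ℕ) : sallyBlockGapCount k d m ≤ k + d := by
  unfold sallyBlockGapCount; split_ifs <;> omega

theorem sallyBlockGapCount_eq_zero {N m : ℕ} (hB : k ≤ (N + 1) * d) (hm : 2 * N + 3 ≤ m) :
    sallyBlockGapCount k d m = 0 := by
  have : (N + 1) * d ≤ (m - 1) / 2 * d := Nat.mul_le_mul_right d (by omega)
  unfold sallyBlockGapCount; split_ifs <;> omega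

theorem notMem_sally_one_iff (hd : 0 < d) {x : ℕ} :
    x ∉ sally (k + d + 1) k 1 ↔ ∃ m, x ∈ sallyGapBlock k d m := by
  simp only [sallyGapBlock, Finset.mem_Ioc]
  constructor
  · intro hx
    obtain ⟨m, t, hte, rfl⟩ : ∃ m t, t < k + d + 1 ∧ x = m * (k + d + 1) + t :=
      ⟨_, _, Nat.mod_lt x (by omega), (Nat.div_add_mod' x (k + d + 1)).symm⟩
    have ht : t ≠ 0 := by
      rintro rfl
      exact hx (mem_sally_one_iff.mpr ⟨m, 0, by simp, by simp⟩)
    rw [mul_add_mem_sally_one_iff hd (by omega) (by omega)] at hx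
    refine ⟨m, by omega, ?_⟩
    unfold sallyBlockGapCount; split_ifs <;> omega
  · rintro ⟨m, hlo, hhi⟩
    have hle := sallyBlockGapCount_le (k := k) (d := d) m
    obtain ⟨t, rfl⟩ : ∃ t, x = m * (k + d + 1) + t := ⟨x - m * (k + d + 1), by omega⟩
    rw [mul_add_mem_sally_one_iff hd (by omega) (by omega)]
    unfold sallyBlockGapCount at hhi; split_ifs at hhi <;> omega

theorem div_eq_of_mem_sallyGapBlock {m x : ℕ} (hx : x ∈ sallyGapBlock k d m) :
    x / (k + d + 1) = m := by
  have hle := sallyBlockGapCount_le (k := k) (d := d) m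
  rw [sallyGapBlock, Finset.mem_Ioc] at hx
  refine Nat.div_eq_of_lt_le (by omega) ?_
  rw [add_one_mul]
  omega

theorem gapsOf_sally_one_eq (hd : 0 < d) {N : ℕ} (hB : k ≤ (N + 1) * d) :
    gapsOf (sally (k + d + 1) k 1) = ↑((Finset.range (2 * N + 3)).biUnion (sallyGapBlock k d)) := by
  ext x
  simp only [gapsOf, Set.mem_ofPred_eq, notMem_sally_one_iff hd, Finset.coe_biUnion,
    Finset.coe_range, Set.mem_iUnion, Set.mem_Iio, Finset.mem_coe, exists_prop]
  refine ⟨fun ⟨m, hm⟩ => ⟨m, ?_, hm⟩, fun ⟨m, _, hm⟩ => ⟨m, hm⟩⟩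
  by_contra! h
  simp [sallyGapBlock, sallyBlockGapCount_eq_zero hB h] at hm

theorem genusOf_sally_one (hd : 0 < d) {N : ℕ} (hB : k ≤ (N + 1) * d) :
    genusOf (sally (k + d + 1) k 1) = ∑ m ∈ Finset.range (2 * N + 3), sallyBlockGapCount k d m := by
  rw [genusOf, gapsOf_sally_one_eq hd hB, Nat.card_coe_set_eq, Set.ncard_coe_finset,
    Finset.card_biUnion]
  · simp [sallyGapBlock]
  · intro m _ m' _ hne
    exact Finset.disjoint_left.mpr fun x hx hx' =>
      hne ((div_eq_of_mem_sallyGapBlock hx).symm.trans (div_eq_of_mem_sallyGapBlock hx'))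

theorem frobeniusNumber_sally_one (hd : 0 < d) {N : ℕ} (hA : N * d < k) (hB : k ≤ (N + 1) * d) :
    frobeniusNumber (sally (k + d + 1) k 1) = (2 * N + 2) * (k + d + 1) + (k - N * d) := by
  have htop : sallyBlockGapCount k d (2 * N + 2) = k - N * d := by
    simp [sallyBlockGapCount, show (2 * N + 1) / 2 = N by omega]
  refine IsGreatest.csSup_eq ⟨?_, ?_⟩
  · simp only [gapsOf, Set.mem_ofPred_eq, notMem_sally_one_iff hd]
    exact ⟨2 * N + 2, by simp only [sallyGapBlock, Finset.mem_Ioc, htop]; omega⟩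
  · intro x hx
    simp only [gapsOf, Set.mem_ofPred_eq, notMem_sally_one_iff hd, sallyGapBlock,
      Finset.mem_Ioc] at hx
    obtain ⟨m, hlo, hhi⟩ := hx
    rcases lt_trichotomy m (2 * N + 2) with hm | rfl | hm
    · have := sallyBlockGapCount_le (k := k) (d := d) m
      nlinarith
    · omega
    · simp [sallyBlockGapCount_eq_zero hB hm] at hhi; omega

theorem cast_sum_sallyBlockGapCount {N : ℕ} (hA : N * d < k) :
    ((∑ m ∈ Finset.range (2 * N + 3), sallyBlockGapCount k d m : ℕ) : ℤ) =
      k + d + 2 * (N + 1) * k - (N + 1) * N * d := by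
  have hcast : ∀ i ∈ Finset.range (N + 1), ((k - i * d : ℕ) : ℤ) = k - i * d := by
    intro i hi
    have : i * d ≤ N * d := Nat.mul_le_mul_right d (by simp at hi; omega)
    push_cast [Nat.cast_sub (by omega : i * d ≤ k)]
    ring
  rw [Finset.sum_range_succ', show 2 * N + 2 = 2 * (N + 1) by ring]
  simp only [sallyBlockGapCount, Nat.add_one_ne_zero, if_false, Nat.add_sub_cancel, if_true]
  rw [Finset.sum_range_two_mul_div_two (fun i => k - i * d), smul_eq_mul, Nat.cast_add,
    Nat.cast_mul, Nat.cast_sum, Finset.sum_congr rfl hcast]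
  push_cast
  rw [two_mul_sum_range_sub_mul]
  push_cast
  ring

end Blocks

theorem exists_params_of_ratio_bounds {e k n : ℕ}
    (h1 : ((n : ℚ) - 2) / ((n : ℚ) - 1) < (k : ℚ) / ((e : ℚ) - 1))
    (h2 : (k : ℚ) / ((e : ℚ) - 1) ≤ ((n : ℚ) - 1) / n) :
    ∃ N d, n = N + 2 ∧ e = k + d + 1 ∧ 0 < d ∧ N * d < k ∧ k ≤ (N + 1) * d := by
  have hn : 2 ≤ n := by
    -- for `n ≤ 1` division by zero gives `(n - 1) / n ≤ 0 ≤ (n - 2) / (n - 1)`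
    by_contra! hn
    interval_cases n <;> norm_num at h1 h2 <;> linarith
  obtain ⟨N, rfl⟩ := Nat.exists_eq_add_of_le' hn
  push_cast at h1 h2
  rw [add_sub_cancel_right] at h1
  rw [show (N : ℚ) + 2 - 1 = N + 1 by ring] at h1 h2
  have hpos : 0 < (k : ℚ) / ((e : ℚ) - 1) := by
    refine lt_of_le_of_lt ?_ h1
    positivity
  obtain ⟨hk, he⟩ : 0 < (k : ℚ) ∧ 0 < (e : ℚ) - 1 := by
    rcases div_pos_iff.mp hpos with h | h
    · exact h
    · exact absurd h.1 (Nat.cast_nonneg k).not_gt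
  rw [div_lt_div_iff₀ (by positivity) he] at h1
  rw [div_le_div_iff₀ he (by positivity)] at h2
  have hke : k + 1 < e := by exact_mod_cast (by nlinarith : (k : ℚ) + 1 < e)
  obtain ⟨d, rfl⟩ : ∃ d, e = k + d + 1 := ⟨e - k - 1, by omega⟩
  push_cast at h1 h2
  refine ⟨N, d, rfl, rfl, by omega, ?_, ?_⟩
  · exact_mod_cast (by nlinarith : (N : ℚ) * d < k)
  · exact_mod_cast (by nlinarith : (k : ℚ) ≤ (N + 1) * d)

theorem sally_j_one_frobenius_genus_general (e k n : ℕ)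
    (h1 : ((n : ℚ) - 2) / ((n : ℚ) - 1) < (k : ℚ) / ((e : ℚ) - 1))
    (h2 : (k : ℚ) / ((e : ℚ) - 1) ≤ ((n : ℚ) - 1) / n) :
    (frobeniusNumber (sally e k 1) : ℤ) = n * e + (n - 1) * k + (n - 2) ∧
    (genusOf (sally e k 1) : ℤ) = n * (n - 1) * k - (n ^ 2 - 3 * n + 1) * (e - 1) := by
  obtain ⟨N, d, rfl, rfl, hd, hA, hB⟩ := exists_params_of_ratio_bounds h1 h2
  constructor
  · rw [frobeniusNumber_sally_one hd hA hB]
    push_cast [Nat.cast_sub hA.le]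
    ring
  · rw [genusOf_sally_one hd hB, cast_sum_sallyBlockGapCount hA]
    push_cast
    ring

theorem sally_j_one_frobenius_genus (e k n : ℕ) (he : 0 < e) (hk : 0 < k) (hn : 0 < n)
    (hke : k ≤ e - 3)
    (h1 : ((n : ℚ) - 2) / ((n : ℚ) - 1) < (k : ℚ) / ((e : ℚ) - 1))
    (h2 : (k : ℚ) / ((e : ℚ) - 1) ≤ ((n : ℚ) - 1) / n) :
    (frobeniusNumber (sally e k 1) : ℤ) = n * e + (n - 1) * k + (n - 2) ∧
    (genusOf (sally e k 1) : ℤ) = n * (n - 1) * k - (n ^ 2 - 3 * n + 1) * (e - 1) :=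
  sally_j_one_frobenius_genus_general e k n h1 h2
end

section
/- Let e, k, n be positive integers with k ≤ e - 3 and (n-2)/(n-1) < k/(e-1) ≤ (n-1)/n. Then the numerical semigroup S = ⟨e, e+k+1, ..., 2e-1⟩ is symmetric if and only if (n-1)k = (n-2)e - (n-3). -/
/-!
Write `e = k + 1 + d`. An element of `S` is `a * e + u` where `u` is a sum of `t ≤ a` numbers from
`[k + 1, k + d]`; comparing residues mod `e` shows that `a * e + r` with `0 < r < e` lies in `S` iff
`k + 1 ≤ q * d + r` for some `q` with `2 * q + 1 ≤ a`. So row `a ≥ 1` of the gaps has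
`k - ⌊(a - 1) / 2⌋ * d` elements, and row `0` has `e - 1`. Writing `n = p + 2`, the window on
`k / (e - 1)` says exactly `p * d < k ≤ (p + 1) * d`: the last nonempty row is `2 * p + 2`, so
`F = (2p + 2) e + k - p d` and `g = e - 1 + ∑_{j ≤ p} 2 (k - j d)`, whence
`2 g - (F + 1) = (2 p + 3) (k - p d - 1)`, and `k = p d + 1` is the stated equation.
-/

open Finset

variable {k d : ℕ}

lemma mul_add_mem_sally {t a u : ℕ} (hta : t ≤ a) (hlo : t * (k + 1) ≤ u) (hhi : u ≤ t * (k + d)) :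
    a * (k + 1 + d) + u ∈ sally (k + 1 + d) k 1 := by
  induction t generalizing a u with
  | zero =>
    obtain rfl : u = 0 := by simpa using hhi
    have he : k + 1 + d ∈ sally (k + 1 + d) k 1 := AddSubmonoid.subset_closure (Or.inl (by simp))
    simpa using AddSubmonoid.nsmul_mem _ he a
  | succ t ih =>
    obtain ⟨a, rfl⟩ : ∃ a', a = a' + 1 := ⟨a - 1, by omega⟩
    have hd : k + 1 ≤ k + d := Nat.le_of_mul_le_mul_left (hlo.trans hhi) t.succ_pos
    have hmono := Nat.mul_le_mul_left t hd
    -- split off one generator `k + 1 + d + c` with `k + 1 ≤ c ≤ k + d`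
    set c := min (k + d) (u - t * (k + 1))
    have e1 : (t + 1) * (k + 1) = t * (k + 1) + (k + 1) := by ring
    have e2 : (t + 1) * (k + d) = t * (k + d) + (k + d) := by ring
    have e3 : (a + 1) * (k + 1 + d) = a * (k + 1 + d) + (k + 1 + d) := by ring
    have hgen : k + 1 + d + c ∈ sally (k + 1 + d) k 1 :=
      AddSubmonoid.subset_closure (Or.inr ⟨by omega, by omega⟩)
    convert add_mem (ih (a := a) (u := u - c) (by omega) (by omega) (by omega)) hgen using 1
    omega

lemma mem_sally_iff_s17 {m : ℕ} :
    m ∈ sally (k + 1 + d) k 1 ↔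
      ∃ a t u, t ≤ a ∧ t * (k + 1) ≤ u ∧ u ≤ t * (k + d) ∧ a * (k + 1 + d) + u = m := by
  refine ⟨fun hm => ?_, fun ⟨a, t, u, hta, hlo, hhi, hm⟩ => hm ▸ mul_add_mem_sally hta hlo hhi⟩
  induction hm using AddSubmonoid.closure_induction with
  | mem x hx =>
    rcases hx with hx | hx <;> simp only [Set.mem_Ico] at hx
    · exact ⟨1, 0, 0, by omega, by omega, by omega, by omega⟩
    · exact ⟨1, 1, x - (k + 1 + d), by omega, by omega, by omega, by omega⟩
  | zero => exact ⟨0, 0, 0, by simp⟩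
  | add x y _ _ hx hy =>
    obtain ⟨a, t, u, hta, hlo, hhi, rfl⟩ := hx
    obtain ⟨a', t', u', hta', hlo', hhi', rfl⟩ := hy
    exact ⟨a + a', t + t', u + u', by omega, by rw [add_mul]; omega, by rw [add_mul]; omega,
      by ring⟩

lemma exists_of_mul_add_mem_sally {a r : ℕ} (hr0 : 0 < r) (hr : r < k + 1 + d)
    (h : a * (k + 1 + d) + r ∈ sally (k + 1 + d) k 1) : ∃ q, 2 * q + 1 ≤ a ∧ k + 1 ≤ q * d + r := by
  obtain ⟨b, t, u, htb, hlo, hhi, hm⟩ := mem_sally_iff_s17.1 h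
  have hba : b ≤ a := by
    by_contra! hab
    nlinarith
  obtain ⟨q, rfl⟩ : ∃ q, a = b + q := ⟨a - b, by omega⟩
  have hu : u = q * (k + 1 + d) + r := by linarith
  have hqt : q < t := by
    by_contra! htq
    nlinarith
  exact ⟨q, by omega, by nlinarith⟩

lemma mul_add_mem_sally_of_le_s17 {a q r : ℕ} (hr : r < k + 1 + d) (hqa : 2 * q + 1 ≤ a)
    (hq : k + 1 ≤ q * d + r) : a * (k + 1 + d) + r ∈ sally (k + 1 + d) k 1 := by
  induction q with
  | zero => simpa using mul_add_mem_sally (t := 1) (by omega) (by omega) (by omega)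
  | succ q ih =>
    by_cases hq' : k + 1 ≤ q * d + r
    · exact ih (by omega) hq'
    -- now `q + 1` is the least admissible index, and then `q + 2` generators `k + 1 + d + c` fit
    have hd : q ≤ q * d := Nat.le_mul_of_pos_right q (by nlinarith)
    convert mul_add_mem_sally (k := k) (d := d) (a := a - (q + 1)) (t := q + 2)
      (u := (q + 1) * (k + 1 + d) + r) (by omega) (by nlinarith) (by nlinarith) using 1
    rw [← add_assoc, ← add_mul, Nat.sub_add_cancel (by omega)]

/-- The number of gaps of `sally (k + 1 + d) k 1` strictly between `a * (k + 1 + d)` and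
`(a + 1) * (k + 1 + d)`. -/
def sallyRowGaps (k d : ℕ) : ℕ → ℕ
  | 0 => k + d
  | a + 1 => k - a / 2 * d

lemma sallyRowGaps_lt (a : ℕ) : sallyRowGaps k d a < k + 1 + d := by
  cases a <;> simp only [sallyRowGaps] <;> omega

lemma mul_add_mem_sally_iff {a r : ℕ} (hr0 : 0 < r) (hr : r < k + 1 + d) :
    a * (k + 1 + d) + r ∈ sally (k + 1 + d) k 1 ↔ sallyRowGaps k d a < r := by
  constructor
  · intro h
    obtain ⟨q, hqa, hq⟩ := exists_of_mul_add_mem_sally hr0 hr h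
    obtain ⟨a, rfl⟩ : ∃ b, a = b + 1 := ⟨a - 1, by omega⟩
    have : q * d ≤ a / 2 * d := Nat.mul_le_mul_right d (by omega)
    simp only [sallyRowGaps]
    omega
  · cases a with
    | zero => simp only [sallyRowGaps]; omega
    | succ a =>
      simp only [sallyRowGaps]
      exact fun h => mul_add_mem_sally_of_le_s17 (q := a / 2) hr (by omega) (by omega)

lemma mem_gapsOf_sally_iff {m : ℕ} :
    m ∈ gapsOf (sally (k + 1 + d) k 1) ↔
      ∃ a r, 0 < r ∧ r ≤ sallyRowGaps k d a ∧ a * (k + 1 + d) + r = m := by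
  constructor
  · intro hm
    have hm' := Nat.div_add_mod' m (k + 1 + d)
    have hr0 : 0 < m % (k + 1 + d) := by
      by_contra! h0
      have hmul := mul_add_mem_sally (k := k) (d := d) (a := m / (k + 1 + d)) (t := 0) (u := 0)
        (Nat.zero_le _) (by simp) (by simp)
      rw [← hm', show m % (k + 1 + d) = 0 by omega] at hm
      exact hm hmul
    refine ⟨m / (k + 1 + d), m % (k + 1 + d), hr0, ?_, hm'⟩
    rw [← not_lt, ← mul_add_mem_sally_iff hr0 (Nat.mod_lt _ (by omega)), hm']
    exact hm
  · rintro ⟨a, r, hr0, hr, rfl⟩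
    exact (mul_add_mem_sally_iff hr0 (hr.trans_lt (sallyRowGaps_lt a))).not.2 (by omega)

variable {p : ℕ}

lemma sallyRowGaps_eq_zero (hhi : k ≤ (p + 1) * d) {a : ℕ} (ha : 2 * p + 3 ≤ a) :
    sallyRowGaps k d a = 0 := by
  obtain ⟨b, rfl⟩ : ∃ b, a = b + 1 := ⟨a - 1, by omega⟩
  have : (p + 1) * d ≤ b / 2 * d := Nat.mul_le_mul_right d (by omega)
  simp only [sallyRowGaps]
  omega

lemma frobeniusNumber_sally_s17 (hlo : p * d < k) (hhi : k ≤ (p + 1) * d) :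
    frobeniusNumber (sally (k + 1 + d) k 1) = (2 * p + 2) * (k + 1 + d) + (k - p * d) := by
  have hlast : sallyRowGaps k d (2 * p + 2) = k - p * d := by
    simp only [sallyRowGaps, show (2 * p + 1) / 2 = p by omega]
  refine IsGreatest.csSup_eq ⟨mem_gapsOf_sally_iff.2 ⟨_, _, by omega, hlast.ge, rfl⟩, ?_⟩
  rintro m hm
  obtain ⟨a, r, hr0, hr, rfl⟩ := mem_gapsOf_sally_iff.1 hm
  rcases lt_trichotomy a (2 * p + 2) with ha | rfl | ha
  · have := sallyRowGaps_lt (k := k) (d := d) a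
    nlinarith
  · omega
  · have := sallyRowGaps_eq_zero hhi (a := a) (by omega)
    omega

lemma gapsOf_sally_eq (hhi : k ≤ (p + 1) * d) :
    gapsOf (sally (k + 1 + d) k 1) =
      ↑(((range (2 * p + 3)).sigma fun a => Icc 1 (sallyRowGaps k d a)).image
        fun x => x.1 * (k + 1 + d) + x.2) := by
  ext m
  simp only [mem_gapsOf_sally_iff, coe_image, Set.mem_image, mem_coe, mem_sigma, mem_range,
    mem_Icc, Sigma.exists]
  constructor
  · rintro ⟨a, r, hr0, hr, rfl⟩
    refine ⟨a, r, ⟨?_, hr0, hr⟩, rfl⟩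
    by_contra! ha
    have := sallyRowGaps_eq_zero hhi ha
    omega
  · rintro ⟨a, r, ⟨-, hr0, hr⟩, rfl⟩
    exact ⟨a, r, hr0, hr, rfl⟩

lemma sum_sallyRowGaps (hlo : p * d ≤ k) :
    ∑ a ∈ range (2 * p + 3), sallyRowGaps k d a + (p + 1) * p * d = k + d + 2 * (p + 1) * k := by
  induction p with
  | zero => simp [sum_range_succ, sallyRowGaps]; ring
  | succ p ih =>
    have ih := ih (le_trans (Nat.mul_le_mul_right d p.le_succ) hlo)
    rw [show 2 * (p + 1) + 3 = 2 * p + 3 + 1 + 1 by ring, sum_range_succ, sum_range_succ]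
    have hrow (a : ℕ) (ha : a / 2 = p + 1) : sallyRowGaps k d (a + 1) = k - (p + 1) * d := by
      rw [sallyRowGaps, ha]
    rw [hrow (2 * p + 2) (by omega), hrow (2 * p + 3) (by omega)]
    have e1 : (p + 1 + 1) * (p + 1) * d = (p + 1) * p * d + 2 * ((p + 1) * d) := by ring
    have e2 : 2 * (p + 1 + 1) * k = 2 * (p + 1) * k + 2 * k := by ring
    omega

lemma genusOf_sally_s17 (hlo : p * d ≤ k) (hhi : k ≤ (p + 1) * d) :
    genusOf (sally (k + 1 + d) k 1) + (p + 1) * p * d = k + d + 2 * (p + 1) * k := by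
  rw [genusOf, gapsOf_sally_eq hhi, Nat.card_coe_set_eq, Set.ncard_coe_finset,
    card_image_of_injOn, card_sigma]
  · simpa only [Nat.card_Icc, Nat.add_sub_cancel] using sum_sallyRowGaps hlo
  · rintro ⟨a, r⟩ hx ⟨a', r'⟩ hx' h
    simp only [coe_sigma, Set.mem_sigma_iff, mem_coe, mem_Icc] at hx hx'
    have hr := hx.2.2.trans_lt (sallyRowGaps_lt a)
    have hr' := hx'.2.2.trans_lt (sallyRowGaps_lt a')
    simp only at h
    have hq := (Nat.div_mod_unique (a := a * (k + 1 + d) + r) (d := a) (by omega)).2 ⟨by ring, hr⟩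
    have hq' := (Nat.div_mod_unique (a := a * (k + 1 + d) + r) (d := a') (by omega)).2
      ⟨by linarith, hr'⟩
    obtain ⟨rfl, rfl⟩ : a = a' ∧ r = r' := ⟨hq.1.symm.trans hq'.1, hq.2.symm.trans hq'.2⟩
    rfl

lemma isSymmetricNS_sally_iff (hlo : p * d < k) (hhi : k ≤ (p + 1) * d) :
    IsSymmetricNS (sally (k + 1 + d) k 1) ↔ k = p * d + 1 := by
  have hg := genusOf_sally_s17 hlo.le hhi
  rw [IsSymmetricNS, frobeniusNumber_sally_s17 hlo hhi]
  zify [hlo.le] at hg ⊢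
  have key : 2 * (genusOf (sally (k + 1 + d) k 1) : ℤ) -
      ((2 * p + 2) * (k + 1 + d) + (k - p * d) + 1) = (2 * p + 3) * (k - (p * d + 1)) := by
    linear_combination 2 * hg
  rw [← sub_eq_zero, key, mul_eq_zero, or_iff_right (by positivity), sub_eq_zero]

theorem sally_j_one_symmetric_iff_general (e k n : ℕ) (hk : 0 < k)
    (hke : k ≤ e - 3)
    (h1 : ((n : ℚ) - 2) / ((n : ℚ) - 1) < (k : ℚ) / ((e : ℚ) - 1))
    (h2 : (k : ℚ) / ((e : ℚ) - 1) ≤ ((n : ℚ) - 1) / n) :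
    IsSymmetricNS (sally e k 1) ↔
      ((n : ℤ) - 1) * k = ((n : ℤ) - 2) * e - ((n : ℤ) - 3) := by
  obtain ⟨d, rfl⟩ : ∃ d, e = k + 1 + d := ⟨e - (k + 1), by omega⟩
  have hkq : (0 : ℚ) < k := by exact_mod_cast hk
  have hden : ((k + 1 + d : ℕ) : ℚ) - 1 = k + d := by push_cast; ring
  rw [hden] at h1 h2
  have hn : 2 ≤ n := by
    by_contra! hn
    have : ((n : ℚ) - 1) / n ≤ 0 := by interval_cases n <;> norm_num
    have : (0 : ℚ) < k / (k + d) := div_pos hkq (by positivity)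
    linarith
  obtain ⟨p, rfl⟩ : ∃ p, n = p + 2 := ⟨n - 2, by omega⟩
  have hp2 : ((p + 2 : ℕ) : ℚ) - 2 = p := by push_cast; ring
  have hp1 : ((p + 2 : ℕ) : ℚ) - 1 = p + 1 := by push_cast; ring
  rw [hp2, hp1, div_lt_div_iff₀ (by positivity) (by positivity)] at h1
  rw [hp1, div_le_div_iff₀ (by positivity) (by positivity)] at h2
  push_cast at h2
  have hlo : p * d < k := by exact_mod_cast (by linarith : (p * d : ℚ) < k)
  have hhi : k ≤ (p + 1) * d := by exact_mod_cast (by linarith : (k : ℚ) ≤ (p + 1) * d)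
  rw [isSymmetricNS_sally_iff hlo hhi, ← Nat.cast_inj (R := ℤ)]
  push_cast
  constructor <;> intro h <;> linear_combination h

theorem sally_j_one_symmetric_iff (e k n : ℕ) (he : 0 < e) (hk : 0 < k) (hn : 0 < n)
    (hke : k ≤ e - 3)
    (h1 : ((n : ℚ) - 2) / ((n : ℚ) - 1) < (k : ℚ) / ((e : ℚ) - 1))
    (h2 : (k : ℚ) / ((e : ℚ) - 1) ≤ ((n : ℚ) - 1) / n) :
    IsSymmetricNS (sally e k 1) ↔
      ((n : ℤ) - 1) * k = ((n : ℤ) - 2) * e - ((n : ℤ) - 3) :=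
  sally_j_one_symmetric_iff_general e k n hk hke h1 h2
end

section
/- Let e ≥ 5. The numerical semigroup ⟨e, e+1, 2e-1⟩ (the Sally type semigroup S_{e-3}^e(2)) is symmetric if and only if e ≡ 2 (mod 3). -/
/-! Residue class `r` modulo `e` of `⟨e, e + 1, 2e - 1⟩` is first reached at `w r = k r * e + r`,
where `k r = min r (2e - 1 - 2r)` are the Kunz coordinates. Hence the genus is `∑ k r` and, by
Selmer's formula, the Frobenius number is `max w - e`, attained at `r = ⌊2e/3⌋`. Writing
`e = 3m + i`, `2g - (F + 1)` equals `2m - 1`, `m`, `0` for `i = 0, 1, 2`. -/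

open Finset

/-- The submonoid whose Apéry element in residue class `r` modulo `e` is `k r * e + r`;
`hk` are the Kunz inequalities. -/
def kunzSubmonoid (e : ℕ) (k : ℕ → ℕ) (he : 0 < e) (hk0 : k 0 = 0)
    (hk : ∀ r s, r < e → s < e → k ((r + s) % e) ≤ k r + k s + (r + s) / e) :
    AddSubmonoid ℕ where
  carrier := {n | k (n % e) ≤ n / e}
  zero_mem' := by simp [hk0]
  add_mem' {a b} ha hb := by
    have hab := hk (a % e) (b % e) (Nat.mod_lt a he) (Nat.mod_lt b he)
    have hsum := Nat.add_div (a := a % e) (b := b % e) he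
    simp only [Nat.mod_mod, Nat.mod_div_self, zero_add] at hsum
    simp only [Set.mem_ofPred_eq, Nat.add_mod a b e, Nat.add_div he] at ha hb ⊢
    omega

theorem mem_kunzSubmonoid {e : ℕ} {k : ℕ → ℕ} {he hk0 hk} {n : ℕ} :
    n ∈ kunzSubmonoid e k he hk0 hk ↔ k (n % e) ≤ n / e :=
  Iff.rfl

section Apery

variable {S : AddSubmonoid ℕ} {e : ℕ} {k : ℕ → ℕ}

theorem mod_eq_and_div_eq_of_eq_mul_add {n q r : ℕ} (he : 0 < e) (hr : r < e)
    (hn : n = q * e + r) :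
    n % e = r ∧ n / e = q := by
  have := (Nat.div_mod_unique (a := n) (d := q) (c := r) he).2 ⟨by rw [hn]; ring, hr⟩
  exact ⟨this.2, this.1⟩

theorem gapsOf_eq_image (he : 0 < e) (hS : ∀ n, n ∈ S ↔ k (n % e) ≤ n / e) :
    gapsOf S = ↑(((range e).sigma fun r => range (k r)).image fun p => p.2 * e + p.1) := by
  ext n
  simp only [gapsOf, Set.mem_ofPred_eq, hS, not_le, coe_image, Set.mem_image, mem_coe, mem_sigma,
    mem_range, Sigma.exists]
  constructor
  · intro hn
    exact ⟨n % e, n / e, ⟨Nat.mod_lt n he, hn⟩, Nat.div_add_mod' n e⟩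
  · rintro ⟨r, q, ⟨hr, hq⟩, rfl⟩
    obtain ⟨hmod, hdiv⟩ := mod_eq_and_div_eq_of_eq_mul_add (n := q * e + r) he hr rfl
    rwa [hmod, hdiv]

theorem genusOf_eq_sum (he : 0 < e) (hS : ∀ n, n ∈ S ↔ k (n % e) ≤ n / e) :
    genusOf S = ∑ r ∈ range e, k r := by
  rw [genusOf, gapsOf_eq_image he hS, Nat.card_coe_set_eq, Set.ncard_coe_finset,
    card_image_of_injOn, card_sigma]
  · simp
  · rintro ⟨r, q⟩ hrq ⟨r', q'⟩ hrq' h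
    simp only [coe_sigma, Set.mem_sigma_iff, mem_coe, mem_range] at hrq hrq' h
    obtain ⟨rfl, rfl⟩ := mod_eq_and_div_eq_of_eq_mul_add he hrq'.1 h
    obtain ⟨h1, h2⟩ := mod_eq_and_div_eq_of_eq_mul_add (n := q * e + r) he hrq.1 rfl
    rw [h1, h2]

/-- Selmer's formula: the Frobenius number is the largest Apéry element minus `e`. -/
theorem frobeniusNumber_eq (he : 0 < e) (hS : ∀ n, n ∈ S ↔ k (n % e) ≤ n / e) {r₀ : ℕ}
    (hr₀ : r₀ < e) (hk₀ : 0 < k r₀) (hmax : ∀ r < e, k r * e + r ≤ k r₀ * e + r₀) :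
    frobeniusNumber S = k r₀ * e + r₀ - e := by
  have hsub : k r₀ * e + r₀ - e = (k r₀ - 1) * e + r₀ := by
    rw [Nat.sub_one_mul]
    have : e ≤ k r₀ * e := Nat.le_mul_of_pos_left e hk₀
    omega
  refine IsGreatest.csSup_eq ⟨?_, fun n hn => ?_⟩
  · obtain ⟨hmod, hdiv⟩ := mod_eq_and_div_eq_of_eq_mul_add he hr₀ hsub
    simp only [gapsOf, Set.mem_ofPred_eq, hS, hmod, hdiv]
    omega
  · simp only [gapsOf, Set.mem_ofPred_eq, hS, not_le] at hn
    have hgap := Nat.mul_le_mul_right e hn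
    have := hmax (n % e) (Nat.mod_lt n he)
    have := Nat.div_add_mod' n e
    rw [Nat.succ_mul] at hgap
    omega

end Apery

/-- Residue `r` is reached most cheaply either as `r • (e + 1) = r * e + r` or as
`(e - r) • (2 * e - 1) = (2 * e - 1 - 2 * r) * e + r`. -/
def kunzCoord (e r : ℕ) : ℕ := min r (2 * e - 1 - 2 * r)

theorem kunzCoord_mod_add_le {e r s : ℕ} (hr : r < e) (hs : s < e) :
    kunzCoord e ((r + s) % e) ≤ kunzCoord e r + kunzCoord e s + (r + s) / e := by
  rcases Nat.lt_or_ge (r + s) e with h | h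
  · rw [Nat.mod_eq_of_lt h, Nat.div_eq_of_lt h]
    unfold kunzCoord
    omega
  · obtain ⟨hmod, hdiv⟩ := mod_eq_and_div_eq_of_eq_mul_add (e := e) (n := r + s) (q := 1)
      (by omega) (show r + s - e < e by omega) (by omega)
    rw [hmod, hdiv]
    unfold kunzCoord
    omega

theorem closure_le_kunzSubmonoid {e : ℕ} (he : 2 ≤ e) :
    AddSubmonoid.closure {e, e + 1, 2 * e - 1} ≤
      kunzSubmonoid e (kunzCoord e) (by omega) (by simp [kunzCoord])
        fun _ _ hr hs => kunzCoord_mod_add_le hr hs := by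
  rw [AddSubmonoid.closure_le]
  rintro x (rfl | rfl | rfl)
  · simp [mem_kunzSubmonoid, kunzCoord]
  · obtain ⟨hmod, hdiv⟩ := mod_eq_and_div_eq_of_eq_mul_add (e := e) (n := e + 1) (r := 1)
      (q := 1) (by omega) he (by omega)
    simp only [SetLike.mem_coe, mem_kunzSubmonoid, hmod, hdiv, kunzCoord]
    omega
  · obtain ⟨hmod, hdiv⟩ := mod_eq_and_div_eq_of_eq_mul_add (e := e) (n := 2 * e - 1)
      (r := e - 1) (q := 1) (by omega) (by omega) (by omega)
    simp only [SetLike.mem_coe, mem_kunzSubmonoid, hmod, hdiv, kunzCoord]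
    omega

theorem mem_closure_of_kunzCoord_le {e n : ℕ} (he : 0 < e) (hn : kunzCoord e (n % e) ≤ n / e) :
    n ∈ AddSubmonoid.closure {e, e + 1, 2 * e - 1} := by
  have hr : n % e < e := Nat.mod_lt n he
  have hn_eq : n = n / e * e + n % e := (Nat.div_add_mod' n e).symm
  have mul_mem : ∀ {x} (c : ℕ), x ∈ ({e, e + 1, 2 * e - 1} : Set ℕ) →
      c * x ∈ AddSubmonoid.closure {e, e + 1, 2 * e - 1} := fun c hx =>
    smul_eq_mul c _ ▸ AddSubmonoid.nsmul_mem _ (AddSubmonoid.subset_closure hx) c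
  rcases le_total (n % e) (2 * e - 1 - 2 * (n % e)) with h | h
  · obtain ⟨d, hd⟩ := Nat.exists_eq_add_of_le (show n % e ≤ n / e by
      simpa [kunzCoord, min_eq_left h] using hn)
    have : n = n % e * (e + 1) + d * e := by rw [hd] at hn_eq; linarith
    rw [this]
    exact add_mem (mul_mem _ (by simp)) (mul_mem _ (by simp))
  · obtain ⟨d, hd⟩ := Nat.exists_eq_add_of_le (show 2 * e - 1 - 2 * (n % e) ≤ n / e by
      simpa [kunzCoord, min_eq_right h] using hn)
    have hcost : (e - n % e) * (2 * e - 1) = (2 * e - 1 - 2 * (n % e)) * e + n % e := by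
      zify [hr.le, show 2 * (n % e) ≤ 2 * e - 1 by omega, show 1 ≤ 2 * e by omega]
      ring
    have : n = (e - n % e) * (2 * e - 1) + d * e := by rw [hcost]; rw [hd] at hn_eq; linarith
    rw [this]
    exact add_mem (mul_mem _ (by simp)) (mul_mem _ (by simp))

theorem mem_closure_iff_kunzCoord {e : ℕ} (he : 2 ≤ e) (n : ℕ) :
    n ∈ AddSubmonoid.closure {e, e + 1, 2 * e - 1} ↔ kunzCoord e (n % e) ≤ n / e :=
  ⟨fun hn => closure_le_kunzSubmonoid he hn, mem_closure_of_kunzCoord_le (by omega)⟩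

theorem sum_range_odd_reverse (m : ℕ) : ∑ x ∈ range m, (2 * m - 1 - 2 * x) = m ^ 2 := by
  induction m with
  | zero => simp
  | succ m ih =>
    rw [sum_range_succ', sum_congr rfl fun k _ =>
      show 2 * (m + 1) - 1 - 2 * (k + 1) = 2 * m - 1 - 2 * k by omega, ih,
      show 2 * (m + 1) - 1 - 2 * 0 = 2 * m + 1 by omega]
    ring

theorem two_mul_sum_kunzCoord {e : ℕ} (he : 0 < e) :
    2 * ∑ r ∈ range e, kunzCoord e r = (e - 1 - e / 3) * (e - e / 3) + 2 * (e / 3) ^ 2 := by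
  obtain ⟨t, ht⟩ : ∃ t, e = t + 1 + e / 3 := ⟨e - 1 - e / 3, by omega⟩
  have hlow : ∑ r ∈ range (t + 1), kunzCoord e r = ∑ r ∈ range (t + 1), r :=
    sum_congr rfl fun r hr => by
      rw [mem_range] at hr
      unfold kunzCoord
      omega
  have hhigh : ∑ x ∈ range (e / 3), kunzCoord e (t + 1 + x) = (e / 3) ^ 2 := by
    rw [← sum_range_odd_reverse]
    refine sum_congr rfl fun x hx => ?_
    rw [mem_range] at hx
    unfold kunzCoord
    omega
  have hgauss := sum_range_id_mul_two (t + 1)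
  rw [Nat.add_sub_cancel] at hgauss
  have hsplit := sum_range_add (kunzCoord e) (t + 1) (e / 3)
  rw [← ht, hlow, hhigh] at hsplit
  rw [hsplit, show e - 1 - e / 3 = t by omega, show e - e / 3 = t + 1 by omega]
  linarith

theorem frobeniusNumber_closure {e : ℕ} (he : 2 ≤ e) :
    frobeniusNumber (AddSubmonoid.closure {e, e + 1, 2 * e - 1}) =
      (2 * e - 1) / 3 * e + 2 * e / 3 - e := by
  have hk₀ : kunzCoord e (2 * e / 3) = (2 * e - 1) / 3 := by unfold kunzCoord; omega
  rw [← hk₀]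
  refine frobeniusNumber_eq (by omega) (mem_closure_iff_kunzCoord he) (by omega)
    (by omega) fun r hr => ?_
  have hlex : kunzCoord e r < kunzCoord e (2 * e / 3) ∨
      kunzCoord e r = kunzCoord e (2 * e / 3) ∧ r ≤ 2 * e / 3 := by
    unfold kunzCoord; omega
  rcases hlex with hlt | ⟨heq, hle⟩
  · have := Nat.mul_le_mul_right e hlt
    rw [Nat.succ_mul] at this
    omega
  · rw [heq]
    omega

theorem kunz_symmetry_equation_iff (e : ℕ) (he : 2 ≤ e) :
    (e - 1 - e / 3) * (e - e / 3) + 2 * (e / 3) ^ 2 = (2 * e - 1) / 3 * e + 2 * e / 3 - e + 1 ↔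
      e % 3 = 2 := by
  obtain ⟨m, he | he | he⟩ : ∃ m, e = 3 * m + 3 ∨ e = 3 * m + 4 ∨ e = 3 * m + 2 :=
    ⟨(e - 2) / 3, by omega⟩
  · rw [show e - 1 - e / 3 = 2 * m + 1 by omega, show e - e / 3 = 2 * m + 2 by omega,
      show e / 3 = m + 1 by omega, show (2 * e - 1) / 3 = 2 * m + 1 by omega,
      show 2 * e / 3 = 2 * m + 2 by omega, he]
    ring_nf; omega
  · rw [show e - 1 - e / 3 = 2 * m + 2 by omega, show e - e / 3 = 2 * m + 3 by omega,
      show e / 3 = m + 1 by omega, show (2 * e - 1) / 3 = 2 * m + 2 by omega,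
      show 2 * e / 3 = 2 * m + 2 by omega, he]
    ring_nf; omega
  · rw [show e - 1 - e / 3 = 2 * m + 1 by omega, show e - e / 3 = 2 * m + 2 by omega,
      show e / 3 = m by omega, show (2 * e - 1) / 3 = 2 * m + 1 by omega,
      show 2 * e / 3 = 2 * m + 1 by omega, he]
    ring_nf; omega

theorem sally_e_em3_2_symmetric_iff (e : ℕ) (he : 5 ≤ e) :
    IsSymmetricNS (AddSubmonoid.closure {e, e + 1, 2 * e - 1}) ↔ e % 3 = 2 := by
  rw [IsSymmetricNS, genusOf_eq_sum (by omega) (mem_closure_iff_kunzCoord (by omega)),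
    two_mul_sum_kunzCoord (by omega), frobeniusNumber_closure (by omega)]
  exact kunz_symmetry_equation_iff e (by omega)
end

section
/- Let e ≥ 6. The numerical semigroup ⟨e, 2e-2, 2e-1⟩ (the Sally type semigroup S_{e-3}^e(1)) is symmetric if and only if e is even. -/
/-!
Write `n = k e - t` with `0 ≤ t < e`; this representation is unique. The generators `e`, `2e - 2`,
`2e - 1` have level and deficit `(k, t) = (1, 0), (2, 2), (2, 1)`, so `n` lies in the semigroup
exactly when `t + t % 2 ≤ k`. The gaps are therefore the numbers `k e - t` with
`0 < k < t + t % 2`: there are `((e - 1)² + 1 - e % 2) / 2` of them, and the largest is `(e - 1) f`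
for the largest odd `f < e`. For even `e` this gives `2g = (e - 1)² + 1 = F + 1`; for odd `e`,
`2g = (e - 1)²` exceeds `F + 1 = (e - 1)(e - 2) + 1`.
-/

open Finset

theorem AddSubmonoid.mem_closure_triple {A : Type*} [AddCommMonoid A] (a b c x : A) :
    x ∈ closure ({a, b, c} : Set A) ↔ ∃ l m n : ℕ, l • a + m • b + n • c = x := by
  rw [← Set.singleton_union, closure_union, mem_sup]
  simp_rw [mem_closure_pair, mem_closure_singleton, exists_exists_eq_and]
  constructor
  · rintro ⟨l, _, ⟨m, n, rfl⟩, rfl⟩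
    exact ⟨l, m, n, add_assoc ..⟩
  · rintro ⟨l, m, n, rfl⟩
    exact ⟨l, _, ⟨m, n, rfl⟩, (add_assoc ..).symm⟩

namespace Nat

lemma exists_add_eq_mul {e : ℕ} (he : 0 < e) (n : ℕ) : ∃ k t, t < e ∧ n + t = k * e := by
  have := div_add_mod (n + (e - 1)) e
  have := mod_lt (n + (e - 1)) he
  exact ⟨(n + (e - 1)) / e, e - 1 - (n + (e - 1)) % e, by omega, by rw [mul_comm]; omega⟩

lemma le_of_add_eq_mul {e n t t' k k' : ℕ} (ht : t < e) (h : n + t = k * e)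
    (h' : n + t' = k' * e) : k ≤ k' :=
  Nat.lt_succ_iff.mp <| Nat.lt_of_mul_lt_mul_right (a := e) (by rw [succ_mul]; omega)

lemma eq_of_add_eq_mul {e n t t' k k' : ℕ} (ht : t < e) (ht' : t' < e) (h : n + t = k * e)
    (h' : n + t' = k' * e) : k = k' ∧ t = t' := by
  obtain rfl := le_antisymm (le_of_add_eq_mul ht h h') (le_of_add_eq_mul ht' h' h)
  omega

end Nat

namespace SallySemigroup

variable {e n : ℕ}

local notation "𝒮" => AddSubmonoid.closure ({e, 2 * e - 2, 2 * e - 1} : Set ℕ)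

lemma mem_closure_iff_exists_add_eq_mul (he : 1 ≤ e) :
    n ∈ 𝒮 ↔ ∃ k t, t + t % 2 ≤ k ∧ n + t = k * e := by
  obtain ⟨m, rfl⟩ : ∃ m, e = m + 1 := ⟨e - 1, by omega⟩
  rw [AddSubmonoid.mem_closure_triple, show 2 * (m + 1) - 2 = 2 * m by omega,
    show 2 * (m + 1) - 1 = 2 * m + 1 by omega]
  simp only [smul_eq_mul]
  constructor
  · rintro ⟨a, b, c, rfl⟩
    exact ⟨a + 2 * b + 2 * c, 2 * b + c, by omega, by ring⟩
  · rintro ⟨k, t, hkt, h⟩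
    obtain ⟨a, rfl⟩ : ∃ a, k = a + 2 * (t / 2) + 2 * (t % 2) :=
      ⟨k - 2 * (t / 2) - 2 * (t % 2), by omega⟩
    have ht := Nat.div_add_mod t 2
    exact ⟨a, t / 2, t % 2, by nlinarith⟩

/-- Raising the level by `j` raises the deficit by `j e ≥ 2 j`, so the representation with
`t < e` is the cheapest one. -/
lemma mem_closure_iff_of_add_eq_mul (he : 2 ≤ e) {k t : ℕ} (ht : t < e) (h : n + t = k * e) :
    n ∈ 𝒮 ↔ t + t % 2 ≤ k := by
  rw [mem_closure_iff_exists_add_eq_mul (by omega)]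
  refine ⟨fun ⟨k', t', hkt', h'⟩ ↦ ?_, fun hkt ↦ ⟨k, t, hkt, h⟩⟩
  obtain ⟨j, rfl⟩ := Nat.exists_eq_add_of_le (Nat.le_of_add_eq_mul ht h h')
  obtain rfl | hj := j.eq_zero_or_pos
  · rw [add_zero] at h' hkt'
    omega
  · have : j * 2 ≤ j * e := Nat.mul_le_mul_left j he
    rw [add_mul] at h'
    omega

lemma notMem_closure_iff (he : 2 ≤ e) :
    n ∉ 𝒮 ↔ ∃ t < e, ∃ k, 0 < k ∧ k < t + t % 2 ∧ n + t = k * e := by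
  obtain ⟨k, t, ht, h⟩ := Nat.exists_add_eq_mul (by omega : 0 < e) n
  rw [mem_closure_iff_of_add_eq_mul he ht h, not_le]
  constructor
  · intro hk
    refine ⟨t, ht, k, Nat.pos_of_ne_zero fun hk0 ↦ ?_, hk, h⟩
    rw [hk0, zero_mul] at h
    omega
  · rintro ⟨t', ht', k', -, hk', h'⟩
    obtain ⟨rfl, rfl⟩ := Nat.eq_of_add_eq_mul ht ht' h h'
    exact hk'

variable (e) in
/-- `⟨t, k⟩` indexes the gap `k * e - t`. -/
def gapIndex : Finset (Σ _ : ℕ, ℕ) := (range e).sigma fun t ↦ Ico 1 (t + t % 2)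

lemma gapsOf_eq (he : 2 ≤ e) : gapsOf 𝒮 = (gapIndex e).image fun p ↦ p.2 * e - p.1 := by
  ext n
  simp only [gapsOf, Set.mem_ofPred_eq, notMem_closure_iff he, coe_image, Set.mem_image,
    mem_coe, gapIndex, mem_sigma, mem_range, mem_Ico, Sigma.exists]
  constructor
  · rintro ⟨t, ht, k, hk, hkt, h⟩
    exact ⟨t, k, ⟨ht, hk, hkt⟩, by omega⟩
  · rintro ⟨t, k, ⟨ht, hk, hkt⟩, rfl⟩
    have : e ≤ k * e := Nat.le_mul_of_pos_left e hk
    exact ⟨t, ht, k, hk, hkt, by omega⟩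

lemma injOn_gapIndex :
    Set.InjOn (fun p : Σ _ : ℕ, ℕ ↦ p.2 * e - p.1) (gapIndex e) := by
  rintro ⟨t, k⟩ hp ⟨t', k'⟩ hp' h
  simp only [gapIndex, coe_sigma, Set.mem_sigma_iff, coe_range, Set.mem_Iio, coe_Ico,
    Set.mem_Ico] at hp hp' h
  have := Nat.le_mul_of_pos_left e hp.2.1
  have := Nat.le_mul_of_pos_left e hp'.2.1
  obtain ⟨rfl, rfl⟩ :=
    Nat.eq_of_add_eq_mul (n := k * e - t) (k := k) (k' := k') hp.1 hp'.1 (by omega) (by omega)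
  rfl

lemma two_mul_sum_range_add_mod_two_sub_one (m : ℕ) :
    2 * ∑ t ∈ range (m + 1), (t + t % 2 - 1) + (m + 1) % 2 = m ^ 2 + 1 := by
  induction m with
  | zero => simp
  | succ m ih =>
    rw [sum_range_succ, show (m + 1) ^ 2 = m ^ 2 + 2 * m + 1 by ring]
    omega

lemma two_mul_genusOf_add_mod_two (he : 2 ≤ e) : 2 * genusOf 𝒮 + e % 2 = (e - 1) ^ 2 + 1 := by
  rw [genusOf, gapsOf_eq he, Nat.card_coe_set_eq, Set.ncard_coe_finset,
    card_image_of_injOn injOn_gapIndex, gapIndex, card_sigma]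
  simp only [Nat.card_Ico]
  obtain ⟨m, rfl⟩ : ∃ m, e = m + 1 := ⟨e - 1, by omega⟩
  exact two_mul_sum_range_add_mod_two_sub_one m

lemma frobeniusNumber_eq (he : 2 ≤ e) : frobeniusNumber 𝒮 = (e - 1) * (e - 1 - e % 2) := by
  refine IsGreatest.csSup_eq ⟨?_, fun n hn ↦ ?_⟩
  · show _ ∉ 𝒮
    rw [notMem_closure_iff he]
    refine ⟨e - 1 - e % 2, by omega, e - 1 - e % 2, by omega, by omega, ?_⟩
    obtain ⟨m, rfl⟩ : ∃ m, e = m + 1 := ⟨e - 1, by omega⟩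
    rw [Nat.add_sub_cancel]
    ring
  · obtain ⟨t, ht, k, -, hkt, h⟩ := (notMem_closure_iff he).mp hn
    have hkf : k ≤ e - 1 - e % 2 := by omega
    have : k ≤ k * e := Nat.le_mul_of_pos_right k (by omega)
    calc n ≤ k * (e - 1) := by rw [Nat.mul_sub_one]; omega
      _ ≤ (e - 1) * (e - 1 - e % 2) := by rw [mul_comm]; exact Nat.mul_le_mul_left _ hkf

end SallySemigroup

theorem sally_e_em3_1_symmetric_iff (e : ℕ) (he : 6 ≤ e) :
    IsSymmetricNS (AddSubmonoid.closure {e, 2 * e - 2, 2 * e - 1}) ↔ 2 ∣ e := by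
  have hg := SallySemigroup.two_mul_genusOf_add_mod_two (by omega : 2 ≤ e)
  rw [IsSymmetricNS, SallySemigroup.frobeniusNumber_eq (by omega),
    Nat.dvd_iff_mod_eq_zero]
  generalize genusOf _ = g at hg ⊢
  obtain ⟨p, rfl⟩ : ∃ p, e = p + 2 := ⟨e - 2, by omega⟩
  have hsq : (p + 1) * (p + 1) = (p + 1) * p + (p + 1) := by ring
  rcases Nat.mod_two_eq_zero_or_one (p + 2) with h | h <;>
    simp only [h, show p + 2 - 1 = p + 1 by omega, Nat.sub_zero, Nat.add_sub_cancel, sq,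
      one_ne_zero, iff_true, iff_false] at hg ⊢ <;>
    omega
end
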